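/- In the heterogeneous random graph G_n(α,β,W), the following exact identity holds for distinct i,j,k: A_{ij}A_{jk}A_{ki} − μ_{ij}μ_{jk}μ_{ki} = Ā_{ij}Ā_{ik}Ā_{jk} + Ā_{ij}Ā_{ik}μ_{jk} + Ā_{ij}Ā_{jk}μ_{ik} + Ā_{ik}Ā_{jk}μ_{ij} + Ā_{jk}μ_{ij}μ_{ik} + Ā_{ij}μ_{jk}μ_{ik} + Ā_{ik}μ_{jk}μ_{ij}, and consequently ∑_{i≠j≠k} ((2μ_i−1)/(μ_i²(μ_i−1)²))·E[(d_i−μ_i)·A_{ij}A_{jk}A_{ki}]/n = (2/n)∑_{i≠j≠k} ((2μ_i−1)/(μ_i²(μ_i−1)²))·μ_{ij}(1−μ_{ij})μ_{ik}μ_{jk} + O(1/(n·n p_n)). -/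

import Mathlib

open MeasureTheory ProbabilityTheory Filter Finset Topology

noncomputable section

namespace HetRG

/-- The edge-probability scale `p_n = n^{-α}`. -/
def pn (α : ℝ) (n : ℕ) : ℝ := (n : ℝ) ^ (-α)

/-- `δ_n = (log (n p_n))^{-2}`. -/
def deltan (α : ℝ) (n : ℕ) : ℝ := (Real.log ((n : ℝ) * pn α n) ^ 2)⁻¹

/-- The heterogeneous Erdős–Rényi random graph `G_n(α, β, W)`: `A` is a symmetric
random 0-1 adjacency matrix with zero diagonal, the entries `A i j` for `i < j` are
independent Bernoulli with success probability `μ_{ij} = p_n * w i j`, where the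
symmetric weight array `w` has zero diagonal and off-diagonal entries in `[β, 1]`. -/
structure IsHetRG (α β : ℝ) {Ω : Type} [MeasureSpace Ω] (n : ℕ)
    (w : Fin n → Fin n → ℝ) (A : Fin n → Fin n → Ω → ℝ) : Prop where
  isProb : IsProbabilityMeasure (volume : Measure Ω)
  meas : ∀ i j, Measurable (A i j)
  wSymm : ∀ i j, w i j = w j i
  wDiag : ∀ i, w i i = 0
  wMem : ∀ i j, i ≠ j → w i j ∈ Set.Icc β 1
  aSymm : ∀ i j, A i j = A j i
  aDiag : ∀ i ω, A i i ω = 0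
  aVal : ∀ i j ω, A i j ω = 0 ∨ A i j ω = 1
  aBern : ∀ i j, i ≠ j → volume {ω | A i j ω = 1} = ENNReal.ofReal (pn α n * w i j)
  aIndep : iIndepFun (m := fun _ => Real.measurableSpace)
      (fun p : {p : Fin n × Fin n // p.1 < p.2} => A p.1.1 p.1.2) volume

variable {Ω : Type} [MeasureSpace Ω]

/-- `μ_{ij} = p_n w_{ij}`. -/
def muij (α : ℝ) {n : ℕ} (w : Fin n → Fin n → ℝ) (i j : Fin n) : ℝ := pn α n * w i j

/-- `μ_i = ∑_j μ_{ij}`. -/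
def mui (α : ℝ) {n : ℕ} (w : Fin n → Fin n → ℝ) (i : Fin n) : ℝ := ∑ j, muij α w i j

/-- The degree `d_i = ∑_j A_{ij}`. -/
def deg {n : ℕ} (A : Fin n → Fin n → Ω → ℝ) (i : Fin n) (ω : Ω) : ℝ := ∑ j, A i j ω

/-- The centered entry `Ā_{ij} = A_{ij} - μ_{ij}`. -/
def abar (α : ℝ) {n : ℕ} (w : Fin n → Fin n → ℝ) (A : Fin n → Fin n → Ω → ℝ)
    (i j : Fin n) (ω : Ω) : ℝ := A i j ω - muij α w i j

/-- `t_i = ∑_{j ≠ k} A_{ij} A_{jk} A_{ki}`. -/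
def tri {n : ℕ} (A : Fin n → Fin n → Ω → ℝ) (i : Fin n) (ω : Ω) : ℝ :=
  ∑ j, ∑ k, if j ≠ k then A i j ω * A j k ω * A k i ω else 0

/-- `∑_{j ≠ k} A_{ij} A_{ik}`, the denominator in the clustering coefficient. -/
def wedge {n : ℕ} (A : Fin n → Fin n → Ω → ℝ) (i : Fin n) (ω : Ω) : ℝ :=
  ∑ j, ∑ k, if j ≠ k then A i j ω * A i k ω else 0

/-- The average clustering coefficient `C̄_n` (summands with zero denominator are zero,
by the junk-value convention `x / 0 = 0`). -/
def clust {n : ℕ} (A : Fin n → Fin n → Ω → ℝ) (ω : Ω) : ℝ :=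
  (n : ℝ)⁻¹ * ∑ i, tri A i ω / wedge A i ω

/-- `a_i = E[1/(d_i (d_i - 1))]`, with the convention that the integrand is `0`
when `d_i ∈ {0, 1}` (junk value `0⁻¹ = 0`). -/
def ai {n : ℕ} (A : Fin n → Fin n → Ω → ℝ) (i : Fin n) : ℝ :=
  ∫ ω, (deg A i ω * (deg A i ω - 1))⁻¹

/-- `E[t_i]`. -/
def Etri {n : ℕ} (A : Fin n → Fin n → Ω → ℝ) (i : Fin n) : ℝ := ∫ ω, tri A i ω

/-- `b_i = E[t_i] (2μ_i - 1) / (μ_i² (μ_i - 1)²)`. -/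
def bi (α : ℝ) {n : ℕ} (w : Fin n → Fin n → ℝ) (A : Fin n → Fin n → Ω → ℝ) (i : Fin n) : ℝ :=
  Etri A i * (2 * mui α w i - 1) / (mui α w i ^ 2 * (mui α w i - 1) ^ 2)

/-- `c_{ij} = ∑_{k ≠ i,j} a_k μ_{ki} μ_{kj}`. -/
def cij (α : ℝ) {n : ℕ} (w : Fin n → Fin n → ℝ) (A : Fin n → Fin n → Ω → ℝ)
    (i j : Fin n) : ℝ :=
  ∑ k, if k ≠ i ∧ k ≠ j then ai A k * muij α w k i * muij α w k j else 0

/-- `d_{ij} = ∑_{k ≠ i,j} μ_{ki} μ_{kj}`. -/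
def dij (α : ℝ) {n : ℕ} (w : Fin n → Fin n → ℝ) (i j : Fin n) : ℝ :=
  ∑ k, if k ≠ i ∧ k ≠ j then muij α w k i * muij α w k j else 0

/-- `e_{ij} = 2 c_{ij} + 2 (a_i d_{ij} + a_j d_{ji}) - b_i - b_j`. -/
def eij (α : ℝ) {n : ℕ} (w : Fin n → Fin n → ℝ) (A : Fin n → Fin n → Ω → ℝ)
    (i j : Fin n) : ℝ :=
  2 * cij α w A i j + 2 * (ai A i * dij α w i j + ai A j * dij α w j i)
    - bi α w A i - bi α w A j

/-- `a_{ijk} = a_i + a_j + a_k`. -/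
def aijk {n : ℕ} (A : Fin n → Fin n → Ω → ℝ) (i j k : Fin n) : ℝ := ai A i + ai A j + ai A k

/-- `σ_{1n}² = (4/n²) ∑_{i<j<k} a_{ijk}² μ_{ij}(1-μ_{ij}) μ_{jk}(1-μ_{jk}) μ_{ki}(1-μ_{ki})`. -/
def sigma1sq (α : ℝ) {n : ℕ} (w : Fin n → Fin n → ℝ) (A : Fin n → Fin n → Ω → ℝ) : ℝ :=
  4 / (n : ℝ) ^ 2 * ∑ i, ∑ j, ∑ k, if i < j ∧ j < k then
    aijk A i j k ^ 2 * (muij α w i j * (1 - muij α w i j)) *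
      (muij α w j k * (1 - muij α w j k)) * (muij α w k i * (1 - muij α w k i)) else 0

/-- `σ_{2n}² = (4/n²) ∑_{i<j} e_{ij}² μ_{ij}(1-μ_{ij})`. -/
def sigma2sq (α : ℝ) {n : ℕ} (w : Fin n → Fin n → ℝ) (A : Fin n → Fin n → Ω → ℝ) : ℝ :=
  4 / (n : ℝ) ^ 2 * ∑ i, ∑ j, if i < j then
    eij α w A i j ^ 2 * (muij α w i j * (1 - muij α w i j)) else 0

/-- The sum of weighted triangles `T_n = ∑_{i<j<k} A_{ij}A_{jk}A_{ki}/(d_i d_j d_k)`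
(summands with zero denominator are zero by the junk-value convention). -/
def Tn {n : ℕ} (A : Fin n → Fin n → Ω → ℝ) (ω : Ω) : ℝ :=
  ∑ i, ∑ j, ∑ k, if i < j ∧ j < k then
    A i j ω * A j k ω * A k i ω / (deg A i ω * deg A j ω * deg A k ω) else 0

/-- `η_i = ∑_{j ≠ k} μ_{ij} μ_{jk} μ_{ki} / (μ_i² μ_j μ_k)`. -/
def etai (α : ℝ) {n : ℕ} (w : Fin n → Fin n → ℝ) (i : Fin n) : ℝ :=
  ∑ j, ∑ k, if j ≠ k then
    muij α w i j * muij α w j k * muij α w k i /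
      (mui α w i ^ 2 * mui α w j * mui α w k) else 0

/-- `γ_{ij} = ∑_{k ∉ {i,j}} μ_{jk} μ_{ki} / (μ_i μ_j μ_k)`. -/
def gammaij (α : ℝ) {n : ℕ} (w : Fin n → Fin n → ℝ) (i j : Fin n) : ℝ :=
  ∑ k, if k ≠ i ∧ k ≠ j then
    muij α w j k * muij α w k i / (mui α w i * mui α w j * mui α w k) else 0

/-- `v_{1n}² = ∑_{i<j<k} μ_{ij}(1-μ_{ij}) μ_{jk}(1-μ_{jk}) μ_{ki}(1-μ_{ki}) / (μ_i² μ_j² μ_k²)`. -/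
def v1sq (α : ℝ) {n : ℕ} (w : Fin n → Fin n → ℝ) : ℝ :=
  ∑ i, ∑ j, ∑ k, if i < j ∧ j < k then
    muij α w i j * (1 - muij α w i j) * (muij α w j k * (1 - muij α w j k)) *
      (muij α w k i * (1 - muij α w k i)) /
      (mui α w i ^ 2 * mui α w j ^ 2 * mui α w k ^ 2) else 0

/-- `v_{2n}² = ∑_{i<j} (γ_{ij} - (η_i + η_j)/2)² μ_{ij}(1-μ_{ij})`. -/
def v2sq (α : ℝ) {n : ℕ} (w : Fin n → Fin n → ℝ) : ℝ :=
  ∑ i, ∑ j, if i < j then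
    (gammaij α w i j - (etai α w i + etai α w j) / 2) ^ 2 *
      (muij α w i j * (1 - muij α w i j)) else 0

/-- Convergence in distribution to the standard normal law `N(0,1)`, phrased as
pointwise convergence of the CDFs (every point is a continuity point of the
standard Gaussian CDF). -/
def CDFTendstoGaussian (X : ℕ → Ω → ℝ) : Prop :=
  ∀ x : ℝ, Tendsto (fun n => (volume {ω | X n ω ≤ x}).toReal) atTop
    (𝓝 ((gaussianReal 0 1 (Set.Iic x)).toReal))

/-- `X_n = o_P(r_n)`: `X_n / r_n → 0` in probability. -/
def IsoP (X : ℕ → Ω → ℝ) (r : ℕ → ℝ) : Prop :=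
  ∀ ε : ℝ, 0 < ε →
    Tendsto (fun n => (volume {ω | ε * |r n| < |X n ω|}).toReal) atTop (𝓝 0)

/-- The Erdős–Rényi weight array: all off-diagonal weights equal to `c`. -/
def wER (c : ℝ) (n : ℕ) : Fin n → Fin n → ℝ := fun i j => if i = j then 0 else c

/-- The rank-1 weight array `w_{ij} = w_i w_j` (zero on the diagonal). -/
def wRank1 {n : ℕ} (v : Fin n → ℝ) : Fin n → Fin n → ℝ :=
  fun i j => if i = j then 0 else v i * v j

section AuxLemmas

variable {α β : ℝ} {n : ℕ} {w : Fin n → Fin n → ℝ} {A : Fin n → Fin n → Ω → ℝ}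

/-- The ordered-edge map sending an unordered pair to its increasing representative. -/
def edge {n : ℕ} {i j : Fin n} (h : i ≠ j) : {p : Fin n × Fin n // p.1 < p.2} :=
  if h' : i < j then ⟨(i, j), h'⟩ else ⟨(j, i), h.lt_or_gt.resolve_left h'⟩

lemma A_edge (hG : IsHetRG α β n w A) {i j : Fin n} (h : i ≠ j) :
    A (edge h).1.1 (edge h).1.2 = A i j := by
  unfold edge; split_ifs with h'
  · rfl
  · exact hG.aSymm j i

lemma edge_ne {i j k l : Fin n} (hij : i ≠ j) (hkl : k ≠ l)
    (h1 : ¬(i = k ∧ j = l)) (h2 : ¬(i = l ∧ j = k)) : edge hij ≠ edge hkl := by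
  intro heq
  unfold edge at heq
  split_ifs at heq <;> simp [Subtype.ext_iff, Prod.ext_iff] at heq <;> tauto

lemma integrable_of_bdd (hG : IsHetRG α β n w A) {g : Ω → ℝ} (hm : Measurable g)
    {C : ℝ} (hb : ∀ ω, |g ω| ≤ C) : Integrable g := by
  haveI := hG.isProb
  exact memLp_one_iff_integrable.mp (MemLp.of_bound hm.aestronglyMeasurable C
    (Filter.Eventually.of_forall fun ω => by simpa [Real.norm_eq_abs] using hb ω))

lemma pn_pos (i : Fin n) : 0 < pn α n := by
  have : (0:ℝ) < n := by exact_mod_cast i.pos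
  exact Real.rpow_pos_of_pos this _

lemma muij_nonneg (hG : IsHetRG α β n w A) (hβ : 0 ≤ β) (i j : Fin n) :
    0 ≤ muij α w i j := by
  by_cases h : i = j
  · simp [muij, h, hG.wDiag]
  · exact mul_nonneg (le_of_lt (pn_pos i)) (le_trans hβ (hG.wMem i j h).1)

lemma muij_le_one (hG : IsHetRG α β n w A) (hβ : 0 ≤ β) (hα : 0 ≤ α) (i j : Fin n) :
    muij α w i j ≤ 1 := by
  by_cases h : i = j
  · simp [muij, h, hG.wDiag]
  · have hn : (1:ℝ) ≤ n := by exact_mod_cast i.pos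
    have hp : pn α n ≤ 1 :=
      Real.rpow_le_one_of_one_le_of_nonpos hn (neg_nonpos.mpr hα)
    calc pn α n * w i j ≤ 1 * 1 :=
          mul_le_mul hp (hG.wMem i j h).2 (le_trans hβ (hG.wMem i j h).1) zero_le_one
      _ = 1 := by ring

lemma muij_symm (hG : IsHetRG α β n w A) (i j : Fin n) :
    muij α w i j = muij α w j i := by simp [muij, hG.wSymm i j]

lemma A_abs_le (hG : IsHetRG α β n w A) (i j : Fin n) (ω : Ω) : |A i j ω| ≤ 1 := by
  rcases hG.aVal i j ω with h | h <;> simp [h]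

lemma int_A (hG : IsHetRG α β n w A) (hβ : 0 ≤ β) {i j : Fin n} (h : i ≠ j) :
    ∫ ω, A i j ω = muij α w i j := by
  haveI := hG.isProb
  have hmeas : MeasurableSet {ω | A i j ω = 1} := hG.meas i j (measurableSet_singleton 1)
  have hind : A i j = Set.indicator {ω | A i j ω = 1} 1 := by
    funext ω
    rcases hG.aVal i j ω with h0 | h1
    · simp [Set.indicator, h0]
    · simp [Set.indicator, h1]
  have h0 : 0 ≤ pn α n * w i j :=
    mul_nonneg (le_of_lt (pn_pos i)) (le_trans hβ (hG.wMem i j h).1)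
  rw [hind, MeasureTheory.integral_indicator_one hmeas, Measure.real, hG.aBern i j h,
    ENNReal.toReal_ofReal h0]
  rfl

lemma int_triple (hG : IsHetRG α β n w A)
    {p q r : {p : Fin n × Fin n // p.1 < p.2}} (hpq : p ≠ q) (hpr : p ≠ r) (hqr : q ≠ r) :
    ∫ ω, A p.1.1 p.1.2 ω * A q.1.1 q.1.2 ω * A r.1.1 r.1.2 ω
      = (∫ ω, A p.1.1 p.1.2 ω) * (∫ ω, A q.1.1 q.1.2 ω) * (∫ ω, A r.1.1 r.1.2 ω) := by
  haveI := hG.isProb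
  set f : {p : Fin n × Fin n // p.1 < p.2} → Ω → ℝ := fun p => A p.1.1 p.1.2 with hf
  have hmeas : ∀ x, Measurable (f x) := fun x => hG.meas _ _
  have hbd : ∀ x ω, |f x ω| ≤ 1 := fun x ω => A_abs_le hG _ _ ω
  have hint : ∀ x, Integrable (f x) := fun x => integrable_of_bdd hG (hmeas x) (hbd x)
  have hint2 : Integrable (f p * f q) := by
    apply integrable_of_bdd hG ((hmeas p).mul (hmeas q))
    intro ω
    calc |(f p * f q) ω| = |f p ω| * |f q ω| := by simp [abs_mul]
      _ ≤ 1 := by nlinarith [hbd p ω, hbd q ω, abs_nonneg (f p ω), abs_nonneg (f q ω)]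
  have h1 : IndepFun (∏ x ∈ ({p, q} : Finset _), f x) (f r) volume :=
    hG.aIndep.indepFun_finsetProd_of_notMem hmeas
      (by simp [Ne.symm hpr, Ne.symm hqr])
  rw [Finset.prod_pair hpq] at h1
  have h2 := h1.integral_mul_eq_mul_integral hint2.aestronglyMeasurable (hint r).aestronglyMeasurable
  have h3 := (hG.aIndep.indepFun hpq).integral_mul_eq_mul_integral (hint p).aestronglyMeasurable (hint q).aestronglyMeasurable
  simpa [Pi.mul_apply] using h2.trans (by
    rw [show (∫ ω, (f p * f q) ω) = ∫ ω, f p ω * f q ω from rfl]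
    rw [show (∫ ω, f p ω * f q ω) = (∫ ω, f p ω) * ∫ ω, f q ω from by
      simpa [Pi.mul_apply] using h3])

lemma int_quad (hG : IsHetRG α β n w A)
    {p q r t : {p : Fin n × Fin n // p.1 < p.2}} (hpq : p ≠ q) (hpr : p ≠ r) (hpt : p ≠ t)
    (hqr : q ≠ r) (hqt : q ≠ t) (hrt : r ≠ t) :
    ∫ ω, A p.1.1 p.1.2 ω * A q.1.1 q.1.2 ω * A r.1.1 r.1.2 ω * A t.1.1 t.1.2 ω
      = (∫ ω, A p.1.1 p.1.2 ω) * (∫ ω, A q.1.1 q.1.2 ω) * (∫ ω, A r.1.1 r.1.2 ω)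
        * (∫ ω, A t.1.1 t.1.2 ω) := by
  haveI := hG.isProb
  set f : {p : Fin n × Fin n // p.1 < p.2} → Ω → ℝ := fun p => A p.1.1 p.1.2 with hf
  have hmeas : ∀ x, Measurable (f x) := fun x => hG.meas _ _
  have hbd : ∀ x ω, |f x ω| ≤ 1 := fun x ω => A_abs_le hG _ _ ω
  have hint : ∀ x, Integrable (f x) := fun x => integrable_of_bdd hG (hmeas x) (hbd x)
  have hint3 : Integrable (f p * (f q * f r)) := by
    apply integrable_of_bdd hG ((hmeas p).mul ((hmeas q).mul (hmeas r)))
    intro ω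
    calc |(f p * (f q * f r)) ω| = |f p ω| * (|f q ω| * |f r ω|) := by simp [abs_mul]
      _ ≤ 1 := by
          have h23 : |f q ω| * |f r ω| ≤ 1 := by
            nlinarith [hbd q ω, hbd r ω, abs_nonneg (f q ω), abs_nonneg (f r ω)]
          nlinarith [hbd p ω, abs_nonneg (f p ω), abs_nonneg (f q ω), abs_nonneg (f r ω),
            mul_nonneg (abs_nonneg (f q ω)) (abs_nonneg (f r ω))]
  have h1 : IndepFun (∏ x ∈ ({p, q, r} : Finset _), f x) (f t) volume :=
    hG.aIndep.indepFun_finsetProd_of_notMem hmeas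
      (by simp [Ne.symm hpt, Ne.symm hqt, Ne.symm hrt])
  rw [Finset.prod_insert (by simp [hpq, hpr]), Finset.prod_pair hqr] at h1
  have h2 := h1.integral_mul_eq_mul_integral hint3.aestronglyMeasurable (hint t).aestronglyMeasurable
  have h3 := int_triple hG hpq hpr hqr
  have h4 : (∫ ω, (f p * (f q * f r)) ω) = (∫ ω, f p ω) * (∫ ω, f q ω) * (∫ ω, f r ω) := by
    rw [show (∫ ω, (f p * (f q * f r)) ω) = ∫ ω, f p ω * f q ω * f r ω from by
      congr 1; funext ω; simp only [Pi.mul_apply]; ring]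
    exact h3
  calc ∫ ω, f p ω * f q ω * f r ω * f t ω = ∫ ω, ((f p * (f q * f r)) * f t) ω := by
        congr 1; funext ω; simp only [Pi.mul_apply]; ring
    _ = (∫ ω, (f p * (f q * f r)) ω) * ∫ ω, f t ω := h2
    _ = (∫ ω, f p ω) * (∫ ω, f q ω) * (∫ ω, f r ω) * ∫ ω, f t ω := by rw [h4]

lemma int_X (hG : IsHetRG α β n w A) (hβ : 0 ≤ β) {i j k : Fin n}
    (hij : i ≠ j) (hjk : j ≠ k) (hik : i ≠ k) :
    ∫ ω, A i j ω * A j k ω * A k i ω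
      = muij α w i j * muij α w j k * muij α w k i := by
  have hki : k ≠ i := Ne.symm hik
  rw [← A_edge hG hij, ← A_edge hG hjk, ← A_edge hG hki]
  rw [int_triple hG (edge_ne hij hjk (by tauto) (by tauto))
    (edge_ne hij hki (by tauto) (by tauto)) (edge_ne hjk hki (by tauto) (by tauto))]
  rw [A_edge hG hij, A_edge hG hjk, A_edge hG hki,
    int_A hG hβ hij, int_A hG hβ hjk, int_A hG hβ hki]

lemma int_Xl (hG : IsHetRG α β n w A) (hβ : 0 ≤ β) {i j k l : Fin n}
    (hij : i ≠ j) (hjk : j ≠ k) (hik : i ≠ k) (hil : i ≠ l) (hlj : l ≠ j) (hlk : l ≠ k) :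
    ∫ ω, A i l ω * A i j ω * A j k ω * A k i ω
      = muij α w i l * muij α w i j * muij α w j k * muij α w k i := by
  have hki : k ≠ i := Ne.symm hik
  rw [← A_edge hG hil, ← A_edge hG hij, ← A_edge hG hjk, ← A_edge hG hki]
  rw [int_quad hG (edge_ne hil hij (by tauto) (by tauto))
    (edge_ne hil hjk (by tauto) (by tauto)) (edge_ne hil hki (by tauto) (by tauto))
    (edge_ne hij hjk (by tauto) (by tauto)) (edge_ne hij hki (by tauto) (by tauto))
    (edge_ne hjk hki (by tauto) (by tauto))]
  rw [A_edge hG hil, A_edge hG hij, A_edge hG hjk, A_edge hG hki,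
    int_A hG hβ hil, int_A hG hβ hij, int_A hG hβ hjk, int_A hG hβ hki]

lemma int_degX (hG : IsHetRG α β n w A) (hβ : 0 ≤ β) (hα : 0 ≤ α) {i j k : Fin n}
    (hij : i ≠ j) (hjk : j ≠ k) (hik : i ≠ k) :
    ∫ ω, (deg A i ω - mui α w i) * (A i j ω * A j k ω * A k i ω)
      = (1 - muij α w i j) * (muij α w i j * muij α w j k * muij α w k i)
        + (1 - muij α w i k) * (muij α w i j * muij α w j k * muij α w k i) := by
  haveI := hG.isProb
  have hXmeas : Measurable (fun ω => A i j ω * A j k ω * A k i ω) :=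
    ((hG.meas i j).mul (hG.meas j k)).mul (hG.meas k i)
  have hXbd : ∀ ω, |A i j ω * A j k ω * A k i ω| ≤ 1 := by
    intro ω
    rcases hG.aVal i j ω with h | h <;> rcases hG.aVal j k ω with h' | h' <;>
      rcases hG.aVal k i ω with h'' | h'' <;> simp [h, h', h'']
  have hXint : Integrable (fun ω => A i j ω * A j k ω * A k i ω) :=
    integrable_of_bdd hG hXmeas hXbd
  have habs : ∀ (l : Fin n) (ω : Ω),
      |(A i l ω - muij α w i l) * (A i j ω * A j k ω * A k i ω)| ≤ 2 := by
    intro l ω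
    have h1 : |A i l ω - muij α w i l| ≤ 2 := by
      have h2 := A_abs_le hG i l ω
      have h3 := muij_nonneg hG hβ i l
      have h4 := muij_le_one hG hβ hα i l
      rw [abs_le] at h2 ⊢
      constructor <;> nlinarith [h2.1, h2.2]
    calc |(A i l ω - muij α w i l) * (A i j ω * A j k ω * A k i ω)|
        = |A i l ω - muij α w i l| * |A i j ω * A j k ω * A k i ω| := abs_mul _ _
      _ ≤ 2 := by nlinarith [hXbd ω, abs_nonneg (A i l ω - muij α w i l),
          abs_nonneg (A i j ω * A j k ω * A k i ω)]
  have hintl : ∀ l : Fin n,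
      Integrable (fun ω => (A i l ω - muij α w i l) * (A i j ω * A j k ω * A k i ω)) :=
    fun l => integrable_of_bdd hG (((hG.meas i l).sub measurable_const).mul hXmeas) (habs l)
  have hEX : ∫ ω, A i j ω * A j k ω * A k i ω
      = muij α w i j * muij α w j k * muij α w k i := int_X hG hβ hij hjk hik
  have hpt : (fun ω => (deg A i ω - mui α w i) * (A i j ω * A j k ω * A k i ω))
      = fun ω => ∑ l, (A i l ω - muij α w i l) * (A i j ω * A j k ω * A k i ω) := by
    funext ω
    rw [deg, mui, ← Finset.sum_sub_distrib, Finset.sum_mul]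
  rw [hpt, MeasureTheory.integral_finset_sum _ (fun l _ => hintl l)]
  have hzero : ∀ l ∈ Finset.univ, l ∉ ({j, k} : Finset (Fin n)) →
      (∫ ω, (A i l ω - muij α w i l) * (A i j ω * A j k ω * A k i ω)) = 0 := by
    intro l _ hl
    simp only [Finset.mem_insert, Finset.mem_singleton] at hl
    push_neg at hl
    obtain ⟨hlj, hlk⟩ := hl
    by_cases hli : l = i
    · subst hli
      have h0 : ∀ ω, (A l l ω - muij α w l l) * (A l j ω * A j k ω * A k l ω) = 0 := by
        intro ω; simp [hG.aDiag, muij, hG.wDiag]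
      simp only [h0, MeasureTheory.integral_zero]
    · have hil : i ≠ l := fun h => hli h.symm
      have hsub : (fun ω => (A i l ω - muij α w i l) * (A i j ω * A j k ω * A k i ω))
          = fun ω => A i l ω * A i j ω * A j k ω * A k i ω
            - muij α w i l * (A i j ω * A j k ω * A k i ω) := by
        funext ω; ring
      have hint4 : Integrable (fun ω => A i l ω * A i j ω * A j k ω * A k i ω) := by
        have hm : Measurable (fun ω => A i l ω * A i j ω * A j k ω * A k i ω) :=
          (((hG.meas i l).mul (hG.meas i j)).mul (hG.meas j k)).mul (hG.meas k i)
        refine integrable_of_bdd hG hm (C := 1) ?_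
        intro ω
        rcases hG.aVal i l ω with h | h <;> rcases hG.aVal i j ω with h' | h' <;>
          rcases hG.aVal j k ω with h'' | h'' <;> rcases hG.aVal k i ω with h''' | h''' <;>
          simp [h, h', h'', h''']
      rw [hsub, MeasureTheory.integral_sub hint4 (hXint.const_mul _),
        MeasureTheory.integral_const_mul, hEX,
        int_Xl hG hβ hij hjk hik hil hlj hlk]
      ring
  rw [← Finset.sum_subset (Finset.subset_univ ({j, k} : Finset (Fin n))) hzero,
    Finset.sum_pair hjk]
  have keyj : ∫ ω, (A i j ω - muij α w i j) * (A i j ω * A j k ω * A k i ω)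
      = (1 - muij α w i j) * (muij α w i j * muij α w j k * muij α w k i) := by
    have hpt2 : (fun ω => (A i j ω - muij α w i j) * (A i j ω * A j k ω * A k i ω))
        = fun ω => (1 - muij α w i j) * (A i j ω * A j k ω * A k i ω) := by
      funext ω; rcases hG.aVal i j ω with h | h <;> rw [h] <;> ring
    rw [hpt2, MeasureTheory.integral_const_mul, hEX]
  have keyk : ∫ ω, (A i k ω - muij α w i k) * (A i j ω * A j k ω * A k i ω)
      = (1 - muij α w i k) * (muij α w i j * muij α w j k * muij α w k i) := by
    have hpt2 : (fun ω => (A i k ω - muij α w i k) * (A i j ω * A j k ω * A k i ω))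
        = fun ω => (1 - muij α w i k) * (A i j ω * A j k ω * A k i ω) := by
      funext ω
      have hs : A i k ω = A k i ω := congrFun (hG.aSymm i k) ω
      rw [hs]
      rcases hG.aVal k i ω with h | h <;> rw [h] <;> ring
    rw [hpt2, MeasureTheory.integral_const_mul, hEX]
  rw [keyj, keyk]

end AuxLemmas

/-- The pointwise algebraic identity expanding
`A_{ij}A_{jk}A_{ki} - μ_{ij}μ_{jk}μ_{ki}` in terms of the centered variables, and the
consequence
`(1/n) ∑_{i≠j≠k} c_i E[(d_i-μ_i) A_{ij}A_{jk}A_{ki}]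
  = (2/n) ∑_{i≠j≠k} c_i μ_{ij}(1-μ_{ij}) μ_{ik} μ_{jk} + O(1/(n · n p_n))`
with `c_i = (2μ_i-1)/(μ_i²(μ_i-1)²)`. -/
theorem triangle_decomposition_identity
    (α β : ℝ) (hα : α ∈ Set.Ioo (0 : ℝ) 1) (hβ : β ∈ Set.Ioo (0 : ℝ) 1) :
    (∀ (n : ℕ) (Ω : Type) [MeasureSpace Ω],
      ∀ (w : Fin n → Fin n → ℝ) (A : Fin n → Fin n → Ω → ℝ), IsHetRG α β n w A →
        ∀ i j k : Fin n, i ≠ j → j ≠ k → i ≠ k → ∀ ω : Ω,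
          A i j ω * A j k ω * A k i ω - muij α w i j * muij α w j k * muij α w k i =
            abar α w A i j ω * abar α w A i k ω * abar α w A j k ω
            + abar α w A i j ω * abar α w A i k ω * muij α w j k
            + abar α w A i j ω * abar α w A j k ω * muij α w i k
            + abar α w A i k ω * abar α w A j k ω * muij α w i j
            + abar α w A j k ω * muij α w i j * muij α w i k
            + abar α w A i j ω * muij α w j k * muij α w i k
            + abar α w A i k ω * muij α w j k * muij α w i j) ∧
    (∃ C : ℝ, 0 < C ∧ ∃ N : ℕ, ∀ n ≥ N,
      ∀ (Ω : Type) [MeasureSpace Ω],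
        ∀ (w : Fin n → Fin n → ℝ) (A : Fin n → Fin n → Ω → ℝ), IsHetRG α β n w A →
          |(n : ℝ)⁻¹ * (∑ i, ∑ j, ∑ k, if i ≠ j ∧ j ≠ k ∧ i ≠ k then
              (2 * mui α w i - 1) / (mui α w i ^ 2 * (mui α w i - 1) ^ 2) *
                ∫ ω, (deg A i ω - mui α w i) * (A i j ω * A j k ω * A k i ω) else 0)
            - 2 / (n : ℝ) * (∑ i, ∑ j, ∑ k, if i ≠ j ∧ j ≠ k ∧ i ≠ k then
              (2 * mui α w i - 1) / (mui α w i ^ 2 * (mui α w i - 1) ^ 2) *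
                (muij α w i j * (1 - muij α w i j)) * muij α w i k * muij α w j k else 0)|
            ≤ C / ((n : ℝ) * ((n : ℝ) * pn α n))) := by
  constructor
  · intro n Ω _ w A hG i j k hij hjk hik ω
    have h1 : A k i ω = A i k ω := congrFun (hG.aSymm k i) ω
    have h2 : muij α w k i = muij α w i k := muij_symm hG k i
    simp only [abar, h1, h2]
    ring
  · refine ⟨1, one_pos, 1, ?_⟩
    intro n hn Ω _ w A hG
    have hβ0 : 0 ≤ β := le_of_lt hβ.1
    have hα0 : 0 ≤ α := le_of_lt hα.1
    have hμs : ∀ a b : Fin n, muij α w a b = muij α w b a := fun a b => muij_symm hG a b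
    have hS : (∑ i, ∑ j, ∑ k, if i ≠ j ∧ j ≠ k ∧ i ≠ k then
          (2 * mui α w i - 1) / (mui α w i ^ 2 * (mui α w i - 1) ^ 2) *
            ∫ ω, (deg A i ω - mui α w i) * (A i j ω * A j k ω * A k i ω) else 0)
        = 2 * (∑ i, ∑ j, ∑ k, if i ≠ j ∧ j ≠ k ∧ i ≠ k then
          (2 * mui α w i - 1) / (mui α w i ^ 2 * (mui α w i - 1) ^ 2) *
            (muij α w i j * (1 - muij α w i j)) * muij α w i k * muij α w j k else 0) := by
      have hsplit : ∀ i j k : Fin n, (if i ≠ j ∧ j ≠ k ∧ i ≠ k then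
            (2 * mui α w i - 1) / (mui α w i ^ 2 * (mui α w i - 1) ^ 2) *
              ∫ ω, (deg A i ω - mui α w i) * (A i j ω * A j k ω * A k i ω) else 0)
          = (if i ≠ j ∧ j ≠ k ∧ i ≠ k then
            (2 * mui α w i - 1) / (mui α w i ^ 2 * (mui α w i - 1) ^ 2) *
              (muij α w i j * (1 - muij α w i j)) * muij α w i k * muij α w j k else 0)
            + (if i ≠ j ∧ j ≠ k ∧ i ≠ k then
            (2 * mui α w i - 1) / (mui α w i ^ 2 * (mui α w i - 1) ^ 2) *
              (muij α w i k * (1 - muij α w i k)) * muij α w i j * muij α w j k else 0) := by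
        intro i j k
        by_cases hP : i ≠ j ∧ j ≠ k ∧ i ≠ k
        · rw [if_pos hP, if_pos hP, if_pos hP,
            int_degX hG hβ0 hα0 hP.1 hP.2.1 hP.2.2, hμs k i]
          ring
        · rw [if_neg hP, if_neg hP, if_neg hP]; ring
      simp only [hsplit, Finset.sum_add_distrib]
      have hswap : (∑ i, ∑ j, ∑ k : Fin n, if i ≠ j ∧ j ≠ k ∧ i ≠ k then
            (2 * mui α w i - 1) / (mui α w i ^ 2 * (mui α w i - 1) ^ 2) *
              (muij α w i k * (1 - muij α w i k)) * muij α w i j * muij α w j k else 0)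
          = ∑ i, ∑ j, ∑ k : Fin n, if i ≠ j ∧ j ≠ k ∧ i ≠ k then
            (2 * mui α w i - 1) / (mui α w i ^ 2 * (mui α w i - 1) ^ 2) *
              (muij α w i j * (1 - muij α w i j)) * muij α w i k * muij α w j k else 0 := by
        apply Finset.sum_congr rfl; intro i _
        rw [Finset.sum_comm]
        apply Finset.sum_congr rfl; intro x _
        apply Finset.sum_congr rfl; intro y _
        by_cases h : i ≠ x ∧ x ≠ y ∧ i ≠ y
        · rw [if_pos (show i ≠ y ∧ y ≠ x ∧ i ≠ x by tauto), if_pos h, hμs y x]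
        · rw [if_neg (by tauto), if_neg h]
      rw [hswap]; ring
    rw [hS]
    have habs0 : ∀ x : ℝ, (n:ℝ)⁻¹ * (2 * x) - 2 / (n:ℝ) * x = 0 := by intro x; ring
    rw [habs0, abs_zero]
    have hn1 : (1:ℝ) ≤ n := by exact_mod_cast hn
    have hpn : 0 < pn α n := Real.rpow_pos_of_pos (by linarith) _
    have hpos : 0 < (n:ℝ) * ((n:ℝ) * pn α n) :=
      mul_pos (by linarith) (mul_pos (by linarith) hpn)
    exact le_of_lt (div_pos one_pos hpos)

end HetRG
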